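/- arXiv:2507.06645 — 8 statements merged into one kernel-verified Lean document; each statement's English description precedes it below -/
import Mathlib

section
/- Proposition 1: In the copy model with parameter p_copy and equal underlying marginals P̃⁽¹⁾ = P̃⁽²⁾, if Σ_y P̃⁽¹⁾(y)² < 1 (so that κ is defined), then Cohen's κ computed from the joint distribution of the copy model equals p_copy. -/
open Finset

/-- The joint distribution of the copy model. -/
noncomputable def copyJoint {K : ℕ} (pc : ℝ) (P1 P2 : Fin K → ℝ) (y₁ y₂ : Fin K) : ℝ :=
  P1 y₁ * (pc * (if y₁ = y₂ then (1 : ℝ) else 0) + (1 - pc) * P2 y₂)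

/-- Cohen's κ as a function of the observed and expected agreement. -/
noncomputable def cohenKappa (pobs pexp : ℝ) : ℝ := (pobs - pexp) / (1 - pexp)

/-- **Proposition 1.** In the copy model with parameter `pc` and equal
underlying marginals `P̃⁽¹⁾ = P̃⁽²⁾ = P`, if `∑ y, P y ^ 2 < 1` (so that κ is defined),
then Cohen's κ of the joint distribution (whose observed marginals both equal `P`,
so the expected agreement is `∑ y, P y ^ 2`) equals `pc`. -/
theorem copyModel_equal_marginals_kappa_eq_pcopy (K : ℕ) (pc : ℝ) (P : Fin K → ℝ)
    (hpc : pc ∈ Set.Icc (0 : ℝ) 1)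
    (hP : ∀ y, 0 ≤ P y) (hPsum : ∑ y, P y = 1)
    (hdef : ∑ y, P y ^ 2 < 1) :
    cohenKappa (∑ y, copyJoint pc P P y y) (∑ y, P y ^ 2) = pc := by
  have h1 : ∑ y, copyJoint pc P P y y = pc + (1 - pc) * ∑ y, P y ^ 2 := by
    have : ∀ y : Fin K, copyJoint pc P P y y = pc * P y + (1 - pc) * P y ^ 2 := by
      intro y; simp [copyJoint]; ring
    simp only [this, Finset.sum_add_distrib, ← Finset.mul_sum, hPsum]; ring
  have h2 : (1 : ℝ) - ∑ y, P y ^ 2 ≠ 0 := by linarith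
  rw [h1, cohenKappa]
  field_simp
  ring
end

section
/- Proposition 2: In the copy model with parameter p_copy and (possibly different) underlying marginals P̃⁽¹⁾, P̃⁽²⁾, let P⁽¹⁾ = P̃⁽¹⁾ and P⁽²⁾ = p_copy·P̃⁽¹⁾ + (1 − p_copy)·P̃⁽²⁾ be the observed marginal distributions. If Σ_y P⁽¹⁾(y)·P⁽²⁾(y) < 1, then Cohen's κ computed from the joint distribution of the copy model equals p_copy · (1 − Σ_y P⁽¹⁾(y)²)/(1 − Σ_y P⁽¹⁾(y)·P⁽²⁾(y)). -/
open Finset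

/-- **Proposition 2.** In the copy model with parameter `pc` and possibly
different underlying marginals `Pt1`, `Pt2`, the observed marginals are `P1 = Pt1` and
`P2 = pc • Pt1 + (1 - pc) • Pt2`; if `∑ y, P1 y * P2 y < 1`, then Cohen's κ of the joint
distribution equals `pc * (1 - ∑ y, P1 y ^ 2) / (1 - ∑ y, P1 y * P2 y)`. -/
theorem copyModel_kappa_eq_pcopy_mul_mismatch (K : ℕ) (pc : ℝ) (Pt1 Pt2 : Fin K → ℝ)
    (hpc : pc ∈ Set.Icc (0 : ℝ) 1)
    (hPt1 : ∀ y, 0 ≤ Pt1 y) (hPt1sum : ∑ y, Pt1 y = 1)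
    (hPt2 : ∀ y, 0 ≤ Pt2 y) (hPt2sum : ∑ y, Pt2 y = 1)
    (P1 P2 : Fin K → ℝ)
    (hP1 : ∀ y, P1 y = Pt1 y)
    (hP2 : ∀ y, P2 y = pc * Pt1 y + (1 - pc) * Pt2 y)
    (hdef : ∑ y, P1 y * P2 y < 1) :
    cohenKappa (∑ y, copyJoint pc Pt1 Pt2 y y) (∑ y, P1 y * P2 y)
      = pc * ((1 - ∑ y, P1 y ^ 2) / (1 - ∑ y, P1 y * P2 y)) := by
  have hne : 1 - ∑ y, P1 y * P2 y ≠ 0 := by linarith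
  have hobs : ∑ y, copyJoint pc Pt1 Pt2 y y
      = pc + (1 - pc) * ∑ y, Pt1 y * Pt2 y := by
    have : ∀ y : Fin K, copyJoint pc Pt1 Pt2 y y = pc * Pt1 y + (1 - pc) * (Pt1 y * Pt2 y) := by
      intro y; simp [copyJoint]; ring
    rw [Finset.sum_congr rfl fun y _ => this y, Finset.sum_add_distrib,
      ← Finset.mul_sum, ← Finset.mul_sum, hPt1sum, mul_one]
  have hS1 : ∑ y, P1 y ^ 2 = ∑ y, Pt1 y ^ 2 := by
    exact Finset.sum_congr rfl fun y _ => by rw [hP1]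
  have hexp : ∑ y, P1 y * P2 y
      = pc * ∑ y, Pt1 y ^ 2 + (1 - pc) * ∑ y, Pt1 y * Pt2 y := by
    rw [Finset.mul_sum, Finset.mul_sum, ← Finset.sum_add_distrib]
    exact Finset.sum_congr rfl fun y _ => by rw [hP1, hP2]; ring
  rw [cohenKappa, hobs, hS1, hexp] at *
  field_simp
  ring
end

section
/- Inversion of the copy model: Let P⁽¹⁾, P⁽²⁾ be probability distributions on K classes with Σ_y P⁽¹⁾(y)² < 1, and let a target value EC ≥ 0 be given. Define p_copy = EC · (1 − Σ_y P⁽¹⁾(y)·P⁽²⁾(y))/(1 − Σ_y P⁽¹⁾(y)²) and P̃⁽²⁾(y) = (P⁽²⁾(y) − p_copy·P⁽¹⁾(y))/(1 − p_copy). If p_copy < 1 and P̃⁽²⁾(y) ≥ 0 for all y, then P̃⁽²⁾ is a probability distribution (its values sum to 1), the copy model with parameter p_copy and underlying marginals P̃⁽¹⁾ = P⁽¹⁾ and P̃⁽²⁾ has observed marginals exactly P⁽¹⁾ and P⁽²⁾, and its Cohen's κ equals EC. -/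
open Finset

theorem sum_mul_lt_one_of_sum_sq {ι : Type*} (s : Finset ι) (p q : ι → ℝ)
    (hp : ∑ i ∈ s, p i ^ 2 < 1) (hq : ∑ i ∈ s, q i ^ 2 ≤ 1) : ∑ i ∈ s, p i * q i < 1 := by
  have amgm : 2 * ∑ i ∈ s, p i * q i ≤ ∑ i ∈ s, p i ^ 2 + ∑ i ∈ s, q i ^ 2 := by
    rw [mul_sum, ← sum_add_distrib]
    exact sum_le_sum fun i _ ↦ by simpa only [mul_assoc] using two_mul_le_add_sq (p i) (q i)
  linarith

section CopyModel

variable {K : ℕ} (pc : ℝ) (P1 Q : Fin K → ℝ)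

theorem sum_copyJoint_right (hQ : ∑ y, Q y = 1) (y : Fin K) :
    ∑ y₂, copyJoint pc P1 Q y y₂ = P1 y := by
  simp only [copyJoint, ← mul_sum, sum_add_distrib, sum_ite_eq, mem_univ, if_true, hQ]
  ring

theorem sum_copyJoint_left (hP1 : ∑ y, P1 y = 1) (y : Fin K) :
    ∑ y₁, copyJoint pc P1 Q y₁ y = pc * P1 y + (1 - pc) * Q y := by
  simp only [copyJoint, mul_add, sum_add_distrib, ← sum_mul, mul_ite, mul_one, mul_zero,
    sum_ite_eq', mem_univ, if_true, ← mul_assoc, hP1]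
  ring

theorem sum_copyJoint_diag_sub (hP1 : ∑ y, P1 y = 1) :
    ∑ y, copyJoint pc P1 Q y y - ∑ y, P1 y * (pc * P1 y + (1 - pc) * Q y) =
      pc * (1 - ∑ y, P1 y ^ 2) := by
  have diag_sub (y : Fin K) : copyJoint pc P1 Q y y - P1 y * (pc * P1 y + (1 - pc) * Q y) =
      pc * P1 y - pc * P1 y ^ 2 := by
    simp only [copyJoint, if_true]
    ring
  rw [← sum_sub_distrib, sum_congr rfl fun y _ ↦ diag_sub y, sum_sub_distrib, ← mul_sum,
    ← mul_sum, hP1, mul_one_sub, mul_one]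

end CopyModel

theorem copyModel_inversion_general (K : ℕ) (P1 P2 : Fin K → ℝ)
    (hP1sum : ∑ y, P1 y = 1)
    (hP2 : ∀ y, 0 ≤ P2 y) (hP2sum : ∑ y, P2 y = 1)
    (EC : ℝ)
    (hP1sq : ∑ y, P1 y ^ 2 < 1)
    (pc : ℝ)
    (hpc : pc = EC * ((1 - ∑ y, P1 y * P2 y) / (1 - ∑ y, P1 y ^ 2)))
    (Qt2 : Fin K → ℝ)
    (hQt2 : ∀ y, Qt2 y = (P2 y - pc * P1 y) / (1 - pc))
    (hpclt : pc < 1) :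
    (∑ y, Qt2 y = 1) ∧
    (∀ y, ∑ y₂, copyJoint pc P1 Qt2 y y₂ = P1 y) ∧
    (∀ y, ∑ y₁, copyJoint pc P1 Qt2 y₁ y = P2 y) ∧
    cohenKappa (∑ y, copyJoint pc P1 Qt2 y y) (∑ y, P1 y * P2 y) = EC := by
  have hpc1 : 1 - pc ≠ 0 := (sub_pos.2 hpclt).ne'
  have hmix : ∀ y, pc * P1 y + (1 - pc) * Qt2 y = P2 y := fun y ↦ by
    rw [hQt2 y, mul_div_cancel₀ _ hpc1]
    ring
  have hQsum : ∑ y, Qt2 y = 1 := by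
    have hsum : ∑ y, (pc * P1 y + (1 - pc) * Qt2 y) = 1 := by simp only [hmix, hP2sum]
    rw [sum_add_distrib, ← mul_sum, ← mul_sum, hP1sum] at hsum
    exact mul_left_cancel₀ hpc1 (by linarith)
  have hP2sq : ∑ y, P2 y ^ 2 ≤ 1 :=
    (sum_sq_le_sq_sum_of_nonneg (s := univ) fun y _ ↦ hP2 y).trans_eq (by rw [hP2sum, one_pow])
  have hexp : ∑ y, P1 y * P2 y < 1 := sum_mul_lt_one_of_sum_sq _ _ _ hP1sq hP2sq
  have hexcess := sum_copyJoint_diag_sub pc P1 Qt2 hP1sum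
  simp only [hmix] at hexcess
  refine ⟨hQsum, sum_copyJoint_right pc P1 Qt2 hQsum, fun y ↦ ?_, ?_⟩
  · rw [sum_copyJoint_left pc P1 Qt2 hP1sum, hmix]
  · rw [cohenKappa, hexcess, hpc]
    field_simp [(sub_pos.2 hexp).ne', (sub_pos.2 hP1sq).ne']

/-- **Inversion of the copy model.** Given target observed marginals
`P1`, `P2` with `∑ y, P1 y ^ 2 < 1` and a target value `EC ≥ 0`, define
`pc = EC * (1 - ∑ P1 P2) / (1 - ∑ P1²)` and `Qt2 y = (P2 y - pc * P1 y) / (1 - pc)`.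
If `pc < 1` and `Qt2` is nonnegative, then `Qt2` is a probability distribution, the copy
model with parameter `pc` and underlying marginals `P1`, `Qt2` has observed marginals
exactly `P1` and `P2`, and its Cohen's κ equals `EC`. -/
theorem copyModel_inversion (K : ℕ) (P1 P2 : Fin K → ℝ)
    (hP1 : ∀ y, 0 ≤ P1 y) (hP1sum : ∑ y, P1 y = 1)
    (hP2 : ∀ y, 0 ≤ P2 y) (hP2sum : ∑ y, P2 y = 1)
    (EC : ℝ) (hEC : 0 ≤ EC)
    (hP1sq : ∑ y, P1 y ^ 2 < 1)
    (pc : ℝ)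
    (hpc : pc = EC * ((1 - ∑ y, P1 y * P2 y) / (1 - ∑ y, P1 y ^ 2)))
    (Qt2 : Fin K → ℝ)
    (hQt2 : ∀ y, Qt2 y = (P2 y - pc * P1 y) / (1 - pc))
    (hpclt : pc < 1) (hQt2nonneg : ∀ y, 0 ≤ Qt2 y) :
    (∑ y, Qt2 y = 1) ∧
    (∀ y, ∑ y₂, copyJoint pc P1 Qt2 y y₂ = P1 y) ∧
    (∀ y, ∑ y₁, copyJoint pc P1 Qt2 y₁ y = P2 y) ∧
    cohenKappa (∑ y, copyJoint pc P1 Qt2 y y) (∑ y, P1 y * P2 y) = EC :=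
  copyModel_inversion_general K P1 P2 hP1sum hP2 hP2sum EC hP1sq pc hpc Qt2 hQt2 hpclt
end

section
/- Floor effect: For a 2×2 confusion matrix of binary correctness values with entries a, b, c, d ≥ 0 summing to 1 (a = both correct, b = only classifier 1 correct, c = only classifier 2 correct, d = both wrong), if classifier 2 is always incorrect (b + d = 1) and classifier 1 is not always incorrect (c + d < 1), then error consistency κ = (p_obs − p_exp)/(1 − p_exp) equals 0, where p_obs = a + d and p_exp = (a+b)(a+c) + (c+d)(b+d). -/
/-- **Floor effect.** For a 2×2 confusion matrix of binary correctness
values with entries `a, b, c, d ≥ 0` summing to 1, if classifier 2 is always incorrect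
(`b + d = 1`) while classifier 1 is not always incorrect (`c + d < 1`), then error
consistency `κ = (p_obs − p_exp)/(1 − p_exp)` equals `0`, where `p_obs = a + d` and
`p_exp = (a+b)(a+c) + (c+d)(b+d)`. -/
theorem errorConsistency_floor (a b c d : ℝ)
    (ha : 0 ≤ a) (hb : 0 ≤ b) (hc : 0 ≤ c) (hd : 0 ≤ d)
    (hsum : a + b + c + d = 1)
    (hallwrong : b + d = 1) (hnotallwrong : c + d < 1) :
    ((a + d) - ((a + b) * (a + c) + (c + d) * (b + d))) /
      (1 - ((a + b) * (a + c) + (c + d) * (b + d))) = 0 := by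
  have ha0 : a = 0 := by linarith
  have hc0 : c = 0 := by linarith
  subst ha0 hc0
  simp [hallwrong]
end

section
/- Upper bound on error consistency from accuracy mismatch: For a 2×2 confusion matrix of binary correctness values with entries a, b, c, d ≥ 0 summing to 1, let p₁ = a + b and p₂ = a + c be the two classifiers' accuracies, p_obs = a + d, and p_exp = p₁·p₂ + (1−p₁)(1−p₂) < 1. Then p_obs ≤ min(p₁, p₂) + min(1−p₁, 1−p₂) = 1 − |p₁ − p₂|, and consequently the error consistency κ = (p_obs − p_exp)/(1 − p_exp) satisfies κ ≤ (1 − |p₁ − p₂| − p_exp)/(1 − p_exp). In particular, error consistency cannot be 1 unless the two accuracies are equal. -/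
/-- **Upper bound on error consistency from accuracy mismatch.**
With accuracies `p₁ = a + b` and `p₂ = a + c`, observed agreement `p_obs = a + d`, and
expected agreement `p_exp = p₁·p₂ + (1−p₁)(1−p₂) < 1`, we have
`p_obs ≤ min p₁ p₂ + min (1−p₁) (1−p₂) = 1 − |p₁ − p₂|`, hence
`κ = (p_obs − p_exp)/(1 − p_exp) ≤ (1 − |p₁ − p₂| − p_exp)/(1 − p_exp)`; in particular
`κ = 1` is only possible when `p₁ = p₂`. -/
theorem errorConsistency_upper_bound (a b c d : ℝ)
    (ha : 0 ≤ a) (hb : 0 ≤ b) (hc : 0 ≤ c) (hd : 0 ≤ d)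
    (hsum : a + b + c + d = 1)
    (p₁ p₂ pobs pexp : ℝ)
    (hp₁ : p₁ = a + b) (hp₂ : p₂ = a + c) (hpobs : pobs = a + d)
    (hpexp : pexp = p₁ * p₂ + (1 - p₁) * (1 - p₂))
    (hlt : pexp < 1) :
    pobs ≤ min p₁ p₂ + min (1 - p₁) (1 - p₂) ∧
    min p₁ p₂ + min (1 - p₁) (1 - p₂) = 1 - |p₁ - p₂| ∧
    (pobs - pexp) / (1 - pexp) ≤ (1 - |p₁ - p₂| - pexp) / (1 - pexp) ∧
    ((pobs - pexp) / (1 - pexp) = 1 → p₁ = p₂) := by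

  have h1 : pobs ≤ min p₁ p₂ + min (1 - p₁) (1 - p₂) := by
    have ha' : a ≤ min p₁ p₂ := le_min (by linarith) (by linarith)
    have hd' : d ≤ min (1 - p₁) (1 - p₂) := le_min (by nlinarith) (by nlinarith)
    linarith
  have h2 : min p₁ p₂ + min (1 - p₁) (1 - p₂) = 1 - |p₁ - p₂| := by
    rcases le_total p₁ p₂ with h | h
    · rw [min_eq_left h, min_eq_right (by linarith), abs_of_nonpos (by linarith)]; ring
    · rw [min_eq_right h, min_eq_left (by linarith), abs_of_nonneg (by linarith)]; ring
  refine ⟨h1, h2, ?_, ?_⟩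
  · exact div_le_div_of_nonneg_right (by linarith [h1, h2.le]) (by linarith)
  · intro hk
    have hne : 1 - pexp ≠ 0 := by linarith
    have hpo : pobs - pexp = 1 - pexp := by
      field_simp at hk; linarith
    have : 1 - |p₁ - p₂| - pexp ≥ 1 - pexp := by linarith [h1, h2]
    have : |p₁ - p₂| ≤ 0 := by linarith
    have := abs_nonneg (p₁ - p₂)
    have : |p₁ - p₂| = 0 := le_antisymm ‹_› ‹_›
    have := abs_eq_zero.mp this
    linarith
end

section
/- Lower bound on error consistency from accuracies: For a 2×2 confusion matrix of binary correctness values with entries a, b, c, d ≥ 0 summing to 1, let p₁ = a + b and p₂ = a + c be the two classifiers' accuracies, p_obs = a + d, and p_exp = p₁·p₂ + (1−p₁)(1−p₂) < 1. Then p_obs ≥ |p₁ + p₂ − 1|, and consequently the error consistency κ = (p_obs − p_exp)/(1 − p_exp) satisfies κ ≥ (|p₁ + p₂ − 1| − p_exp)/(1 − p_exp). In particular, κ can attain −1 only when p₁ + p₂ = 1. -/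
/-- **Lower bound on error consistency from accuracies.**
With accuracies `p₁ = a + b` and `p₂ = a + c`, observed agreement `p_obs = a + d`, and
expected agreement `p_exp = p₁·p₂ + (1−p₁)(1−p₂) < 1`, we have `p_obs ≥ |p₁ + p₂ − 1|`,
hence `κ = (p_obs − p_exp)/(1 − p_exp) ≥ (|p₁ + p₂ − 1| − p_exp)/(1 − p_exp)`; in
particular `κ = −1` is only possible when `p₁ + p₂ = 1`. -/
theorem errorConsistency_lower_bound (a b c d : ℝ)
    (ha : 0 ≤ a) (hb : 0 ≤ b) (hc : 0 ≤ c) (hd : 0 ≤ d)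
    (hsum : a + b + c + d = 1)
    (p₁ p₂ pobs pexp : ℝ)
    (hp₁ : p₁ = a + b) (hp₂ : p₂ = a + c) (hpobs : pobs = a + d)
    (hpexp : pexp = p₁ * p₂ + (1 - p₁) * (1 - p₂))
    (hlt : pexp < 1) :
    |p₁ + p₂ - 1| ≤ pobs ∧
    (|p₁ + p₂ - 1| - pexp) / (1 - pexp) ≤ (pobs - pexp) / (1 - pexp) ∧
    ((pobs - pexp) / (1 - pexp) = -1 → p₁ + p₂ = 1) := by
  have hpos : 0 < 1 - pexp := by linarith
  have h1 : |p₁ + p₂ - 1| ≤ pobs := by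
    rw [abs_le]
    constructor <;> [skip; skip] <;> subst hp₁ hp₂ hpobs <;> linarith
  refine ⟨h1, ?_, ?_⟩
  · gcongr
  · intro h
    have h2 : pobs = 2 * pexp - 1 := by
      have := hpos.ne'
      field_simp at h
      linarith
    subst hp₁ hp₂ hpobs hpexp
    nlinarith [sq_nonneg (b - c), sq_nonneg (b + c), mul_nonneg hb hc,
      mul_nonneg ha hd, mul_nonneg (mul_nonneg hb hc) hd,
      mul_nonneg (mul_nonneg hb hc) ha, sq_nonneg (a - d), sq_nonneg (a*b - c*d)]
end

section
/- Interpretability of EC under equal accuracies: for two binary-correctness distributions generated by the copy model on 2 classes (correct/incorrect) with equal underlying accuracies p̃₁ = p̃₂ = p ∈ (0,1), the observed accuracies of both classifiers equal p, and the error consistency κ equals the copy probability p_copy; hence all values of κ in [0,1] are attainable at matched accuracies. -/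
lemma ec_key (p pc : ℝ) (hp : p ∈ Set.Ioo (0 : ℝ) 1)
    (a b c d pexp : ℝ)
    (haa : a = p * (pc + (1 - pc) * p))
    (hbb : b = p * (1 - pc) * (1 - p))
    (hcc : c = (1 - p) * (1 - pc) * p)
    (hdd : d = (1 - p) * (pc + (1 - pc) * (1 - p)))
    (hpexp : pexp = (a + b) * (a + c) + (c + d) * (b + d)) :
    (a + b = p) ∧ (a + c = p) ∧ ((a + d - pexp) / (1 - pexp) = pc) := by
  obtain ⟨h0, h1⟩ := hp
  have hab : a + b = p := by rw [haa, hbb]; ring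
  have hac : a + c = p := by rw [haa, hcc]; ring
  refine ⟨hab, hac, ?_⟩
  have hden : 1 - pexp = 2 * p * (1 - p) := by
    rw [hpexp, haa, hbb, hcc, hdd]; ring
  have hne : (1 : ℝ) - pexp ≠ 0 := by
    rw [hden]; have : 0 < 1 - p := by linarith
    positivity
  rw [div_eq_iff hne, hden, hpexp, haa, hbb, hcc, hdd]; ring

/-- **Interpretability of EC under equal accuracies.** For two
binary-correctness distributions generated by the copy model on 2 classes with equal
underlying accuracies `p̃₁ = p̃₂ = p ∈ (0,1)`, the observed accuracies of both
classifiers equal `p`, and the error consistency κ equals the copy probability `pc`;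
hence all values of κ in `[0,1]` are attainable at matched accuracies. -/
theorem errorConsistency_equal_accuracies (p pc : ℝ)
    (hp : p ∈ Set.Ioo (0 : ℝ) 1) (hpc : pc ∈ Set.Icc (0 : ℝ) 1)
    (a b c d pexp : ℝ)
    (haa : a = p * (pc + (1 - pc) * p))
    (hbb : b = p * (1 - pc) * (1 - p))
    (hcc : c = (1 - p) * (1 - pc) * p)
    (hdd : d = (1 - p) * (pc + (1 - pc) * (1 - p)))
    (hpexp : pexp = (a + b) * (a + c) + (c + d) * (b + d)) :
    (a + b = p) ∧ (a + c = p) ∧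
    ((a + d - pexp) / (1 - pexp) = pc) ∧
    (∀ k ∈ Set.Icc (0 : ℝ) 1, ∃ q ∈ Set.Icc (0 : ℝ) 1,
      ∃ a' b' c' d' pexp' : ℝ,
        a' = p * (q + (1 - q) * p) ∧
        b' = p * (1 - q) * (1 - p) ∧
        c' = (1 - p) * (1 - q) * p ∧
        d' = (1 - p) * (q + (1 - q) * (1 - p)) ∧
        pexp' = (a' + b') * (a' + c') + (c' + d') * (b' + d') ∧
        a' + b' = p ∧ a' + c' = p ∧
        (a' + d' - pexp') / (1 - pexp') = k) := by
  obtain ⟨h1, h2, h3⟩ := ec_key p pc hp a b c d pexp haa hbb hcc hdd hpexp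
  refine ⟨h1, h2, h3, fun k hk => ⟨k, hk, ?_⟩⟩
  obtain ⟨g1, g2, g3⟩ := ec_key p k hp _ _ _ _ _ rfl rfl rfl rfl rfl
  exact ⟨_, _, _, _, _, rfl, rfl, rfl, rfl, rfl, g1, g2, g3⟩
end

section
/- Monotonicity of error consistency in the copy probability: fix underlying marginal distributions P̃⁽¹⁾, P̃⁽²⁾ on K classes with P̃⁽¹⁾ not a point mass. Then the map p_copy ↦ κ(p_copy), where κ(p_copy) = p_copy·(1 − Σ_y P̃⁽¹⁾(y)²)/(1 − Σ_y P̃⁽¹⁾(y)·(p_copy·P̃⁽¹⁾(y) + (1−p_copy)·P̃⁽²⁾(y))) is Cohen's κ of the copy model, is strictly increasing in p_copy on [0,1), with κ(0) = 0. -/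
open Finset

/-- **Monotonicity of error consistency in the copy probability.**
Fix underlying marginals `P1`, `P2` on `K` classes with `P1` not a point mass. The map
`pc ↦ κ(pc) = pc * (1 − ∑ P1²) / (1 − ∑ y, P1 y * (pc * P1 y + (1 − pc) * P2 y))`
(Cohen's κ of the copy model) is strictly increasing on `[0,1)`, with `κ(0) = 0`. -/
theorem copyModel_kappa_strictMonoOn (K : ℕ) (P1 P2 : Fin K → ℝ)
    (hP1 : ∀ y, 0 ≤ P1 y) (hP1sum : ∑ y, P1 y = 1)
    (hP2 : ∀ y, 0 ≤ P2 y) (hP2sum : ∑ y, P2 y = 1)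
    (hnotpoint : ∀ y, P1 y < 1)
    (κ : ℝ → ℝ)
    (hκ : ∀ pc, κ pc = pc * ((1 - ∑ y, P1 y ^ 2) /
        (1 - ∑ y, P1 y * (pc * P1 y + (1 - pc) * P2 y)))) :
    StrictMonoOn κ (Set.Ico (0 : ℝ) 1) ∧ κ 0 = 0 := by
  set S : ℝ := ∑ y, P1 y ^ 2 with hS
  set T : ℝ := ∑ y, P1 y * P2 y with hT
  -- there is a class with positive P1 mass
  have hex1 : ∃ y ∈ Finset.univ, 0 < P1 y := by
    by_contra h
    push_neg at h
    have : ∑ y, P1 y ≤ 0 := Finset.sum_nonpos fun y hy => h y hy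
    linarith
  have hex2 : ∃ y ∈ Finset.univ, 0 < P2 y := by
    by_contra h
    push_neg at h
    have : ∑ y, P2 y ≤ 0 := Finset.sum_nonpos fun y hy => h y hy
    linarith
  obtain ⟨y1, -, hy1⟩ := hex1
  obtain ⟨y2, -, hy2⟩ := hex2
  have hSlt : S < 1 := by
    have : S < ∑ y, P1 y := by
      apply Finset.sum_lt_sum
      · intro y _
        nlinarith [hP1 y, hnotpoint y]
      · exact ⟨y1, Finset.mem_univ y1, by nlinarith [hnotpoint y1]⟩
    linarith
  have hTlt : T < 1 := by
    have : T < ∑ y, P2 y := by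
      apply Finset.sum_lt_sum
      · intro y _
        nlinarith [hP2 y, hP1 y, hnotpoint y]
      · exact ⟨y2, Finset.mem_univ y2, by nlinarith [hnotpoint y2, hP1 y2]⟩
    linarith
  have hsum : ∀ pc : ℝ, (∑ y, P1 y * (pc * P1 y + (1 - pc) * P2 y))
      = pc * S + (1 - pc) * T := by
    intro pc
    rw [hS, hT, Finset.mul_sum, Finset.mul_sum, ← Finset.sum_add_distrib]
    apply Finset.sum_congr rfl
    intro y _
    ring
  have hκ' : ∀ pc : ℝ, κ pc = pc * (1 - S) / (pc * (1 - S) + (1 - pc) * (1 - T)) := by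
    intro pc
    rw [hκ pc, hsum pc]
    rw [mul_div_assoc]
    congr 1
    ring
  constructor
  · intro a ha b hb hab
    obtain ⟨ha0, ha1⟩ := ha
    obtain ⟨hb0, hb1⟩ := hb
    rw [hκ' a, hκ' b]
    have hDa : 0 < a * (1 - S) + (1 - a) * (1 - T) := by nlinarith
    have hDb : 0 < b * (1 - S) + (1 - b) * (1 - T) := by nlinarith
    rw [div_lt_div_iff₀ hDa hDb]
    nlinarith [mul_pos (sub_pos.mpr hSlt) (sub_pos.mpr hTlt)]
  · rw [hκ 0]; ring
end
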